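/- Let T₁ and T₂ be commuting contractions on a complex Hilbert space H and T = T₁T₂. Let F★ := H ⊕ H, let P′ be the orthogonal projection of F★ onto the first summand, and suppose U′ is a unitary on F★ satisfying U′(D_{T₁*}T₂*h, D_{T₂*}h) = (D_{T₁*}h, D_{T₂*}T₁*h) for all h ∈ H. Define γ : H → F★ by γh := (D_{T₁*}T₂*h, D_{T₂*}h), and set H₁ := (I − P′)U′ and H₂ := U′*P′. Then for all h ∈ H: γ(T₁*h) = H₁(γh) + H₂*(γ(T*h)) and γ(T₂*h) = H₂(γh) + H₁*(γ(T*h)). -/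

import Mathlib

/-!
Since `U'γk = (D₁k, D₂T₁*k)`, the projections `P'` and `1 - P'` pick out its two halves, and the
first identity is a coordinate computation. For the second, commutativity gives `T₁*T₂* = T*`, so
`P'γh + (1 - P')γ(T*h) = (D₁T₂*h, D₂T*h) = U'γ(T₂*h)`; applying `U'*` and `U'*U' = 1` finishes.
-/

open ContinuousLinearMap

/-- The Hilbert space direct sum `H ⊕ H`, realized as `WithLp 2 (H × H)`. -/
noncomputable abbrev HilbertProd (H : Type*) : Type _ := WithLp 2 (H × H)

/-- The element `(x, y)` of the Hilbert space direct sum `H ⊕ H`. -/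
noncomputable abbrev pairL2 {H : Type*} (x y : H) : HilbertProd H :=
  (WithLp.equiv 2 (H × H)).symm (x, y)

lemma pairL2_add_pairL2 {H : Type*} [AddCommGroup H] (a b c d : H) :
    pairL2 a b + pairL2 c d = pairL2 (a + c) (b + d) := rfl

section
variable {H : Type*} [NormedAddCommGroup H] [InnerProductSpace ℂ H]
  {P : HilbertProd H →L[ℂ] HilbertProd H} (hP : ∀ x y : H, P (pairL2 x y) = pairL2 x 0)
include hP

lemma apply_eq_pairL2_fst (v : HilbertProd H) : P v = pairL2 v.fst 0 :=
  hP v.fst v.snd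

lemma one_sub_apply_pairL2 (x y : H) : (1 - P) (pairL2 x y) = pairL2 0 y := by
  rw [sub_apply, hP]
  exact congrArg₂ pairL2 (sub_self x) (sub_zero y)

lemma isSelfAdjoint_of_apply_pairL2 [CompleteSpace H] : IsSelfAdjoint P := by
  rw [ContinuousLinearMap.isSelfAdjoint_iff_isSymmetric]
  intro v w
  simp [apply_eq_pairL2_fst hP, WithLp.prod_inner_apply]
end

theorem ando_tuple_relations_adjoint_general {H : Type*} [NormedAddCommGroup H]
    [InnerProductSpace ℂ H] [CompleteSpace H] (T₁ T₂ D₁ D₂ : H →L[ℂ] H)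
    (hcomm : T₁ * T₂ = T₂ * T₁)
    (P' U' : HilbertProd H →L[ℂ] HilbertProd H)
    (hP' : ∀ x y : H, P' (pairL2 x y) = pairL2 x 0)
    (hU'iso : adjoint U' * U' = 1)
    (hU' : ∀ h : H, U' (pairL2 (D₁ (adjoint T₂ h)) (D₂ h))
      = pairL2 (D₁ h) (D₂ (adjoint T₁ h)))
    (gam : H → HilbertProd H)
    (hgam : ∀ h : H, gam h = pairL2 (D₁ (adjoint T₂ h)) (D₂ h))
    (H₁ H₂ : HilbertProd H →L[ℂ] HilbertProd H)
    (hH₁ : H₁ = (1 - P') * U') (hH₂ : H₂ = adjoint U' * P') :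
    ∀ h : H,
      gam (adjoint T₁ h) = H₁ (gam h) + adjoint H₂ (gam (adjoint (T₁ * T₂) h)) ∧
      gam (adjoint T₂ h) = H₂ (gam h) + adjoint H₁ (gam (adjoint (T₁ * T₂) h)) := by
  intro h
  have hP'sa := isSelfAdjoint_of_apply_pairL2 hP'
  have hH₁adj : adjoint H₁ = adjoint U' * (1 - P') := by
    rw [hH₁, ← star_eq_adjoint, ← star_eq_adjoint, star_mul, star_sub, star_one, hP'sa.star_eq]
  have hH₂adj : adjoint H₂ = P' * U' := by
    rw [hH₂, ← star_eq_adjoint, ← star_eq_adjoint, star_mul, star_star, hP'sa.star_eq]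
  have hUγ (k : H) : U' (gam k) = pairL2 (D₁ k) (D₂ (adjoint T₁ k)) := by rw [hgam, hU']
  have hT : adjoint (T₁ * T₂) h = adjoint T₂ (adjoint T₁ h) := by
    rw [← star_eq_adjoint, star_mul]; rfl
  have hT' : adjoint (T₁ * T₂) h = adjoint T₁ (adjoint T₂ h) := by
    rw [hcomm, ← star_eq_adjoint, star_mul]; rfl
  constructor
  · rw [hH₁, hH₂adj, mul_apply_eq_comp, mul_apply_eq_comp, hUγ, hUγ, one_sub_apply_pairL2 hP', hP',
      pairL2_add_pairL2, hgam, hT, add_zero, zero_add]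
  · have hU'γ : U' (gam (adjoint T₂ h)) = P' (gam h) + (1 - P') (gam (adjoint (T₁ * T₂) h)) := by
      rw [hUγ, hgam h, hgam, hP', one_sub_apply_pairL2 hP', pairL2_add_pairL2, hT', add_zero,
        zero_add]
    rw [hH₂, hH₁adj, mul_apply_eq_comp, mul_apply_eq_comp, ← map_add, ← hU'γ, ← mul_apply_eq_comp,
      hU'iso, one_apply_eq_self]

/-- Let `T₁, T₂` be commuting contractions, `T = T₁T₂`, with adjoint defect operators
`D₁ = D_{T₁*}`, `D₂ = D_{T₂*}`, `D = D_{T*}`.  On `F★ = H ⊕ H` let `P'` be the projection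
onto the first summand, `U'` a unitary with `U'(D₁T₂*h, D₂h) = (D₁h, D₂T₁*h)`,
`γh = (D₁T₂*h, D₂h)`, `H₁ = (I-P')U'`, `H₂ = U'*P'`.  Then
`γ(T₁*h) = H₁(γh) + H₂*(γ(T*h))` and `γ(T₂*h) = H₂(γh) + H₁*(γ(T*h))`. -/
theorem ando_tuple_relations_adjoint {H : Type*} [NormedAddCommGroup H]
    [InnerProductSpace ℂ H] [CompleteSpace H] (T₁ T₂ D₁ D₂ D : H →L[ℂ] H)
    (hT₁ : ‖T₁‖ ≤ 1) (hT₂ : ‖T₂‖ ≤ 1) (hcomm : T₁ * T₂ = T₂ * T₁)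
    (hD₁pos : D₁.IsPositive) (hD₁sq : D₁ * D₁ = 1 - T₁ * adjoint T₁)
    (hD₂pos : D₂.IsPositive) (hD₂sq : D₂ * D₂ = 1 - T₂ * adjoint T₂)
    (hDpos : D.IsPositive) (hDsq : D * D = 1 - (T₁ * T₂) * adjoint (T₁ * T₂))
    (P' U' : HilbertProd H →L[ℂ] HilbertProd H)
    (hP' : ∀ x y : H, P' (pairL2 x y) = pairL2 x 0)
    (hU'iso : adjoint U' * U' = 1) (hU'co : U' * adjoint U' = 1)
    (hU' : ∀ h : H, U' (pairL2 (D₁ (adjoint T₂ h)) (D₂ h))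
      = pairL2 (D₁ h) (D₂ (adjoint T₁ h)))
    (gam : H → HilbertProd H)
    (hgam : ∀ h : H, gam h = pairL2 (D₁ (adjoint T₂ h)) (D₂ h))
    (H₁ H₂ : HilbertProd H →L[ℂ] HilbertProd H)
    (hH₁ : H₁ = (1 - P') * U') (hH₂ : H₂ = adjoint U' * P') :
    ∀ h : H,
      gam (adjoint T₁ h) = H₁ (gam h) + adjoint H₂ (gam (adjoint (T₁ * T₂) h)) ∧
      gam (adjoint T₂ h) = H₂ (gam h) + adjoint H₁ (gam (adjoint (T₁ * T₂) h)) :=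
  ando_tuple_relations_adjoint_general T₁ T₂ D₁ D₂ hcomm P' U' hP' hU'iso hU' gam hgam H₁ H₂ hH₁ hH₂
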